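/- Let f : ℕ → ℝ be such that f(0) is a positive integer. If the difference function ∂f, defined by ∂f(n) := f(n+1) − f(n), is a D0L-growth function, then f is also a D0L-growth function. -/

import Mathlib

/-!
Telescoping gives `f n = f 0 + ∑ k < n, ∂f k`, so it suffices to realise `m + ∑ k < n, |σᵏ(w)|`
as a growth function. Extend the alphabet of `(A, σ, w)` by a letter `b ↦ b w`, so that
`σⁿ(b) = b w σ(w) ⋯ σⁿ⁻¹(w)`, and by a letter `c ↦ c`; the start word `b cᵐ⁻¹` then has the required
growth.
-/

/-- A function `f : ℕ → ℝ` is a D0L-growth function if there is a D0L-system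
`(A, σ, w)` such that `f n` is the length of `σⁿ(w)` for every `n`. -/
def IsD0LGrowth (f : ℕ → ℝ) : Prop :=
  ∃ (A : Type) (_ : Fintype A) (σ : FreeMonoid A →* FreeMonoid A) (w : FreeMonoid A),
    ∀ n : ℕ, f n = ((⇑σ)^[n] w).length

theorem FreeMonoid.length_map {α β : Type*} (f : α → β) (u : FreeMonoid α) :
    (FreeMonoid.map f u).length = u.length :=
  List.length_map _

theorem FreeMonoid.length_pow {α : Type*} (u : FreeMonoid α) (k : ℕ) :
    (u ^ k).length = k * u.length := by
  induction k with
  | zero => rw [pow_zero, FreeMonoid.length_one, zero_mul]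
  | succ k ih => rw [pow_succ, FreeMonoid.length_mul, ih, Nat.succ_mul]

namespace D0L

variable {A : Type} (σ : FreeMonoid A →* FreeMonoid A) (w : FreeMonoid A)

/-- `σ` extended by the letters `b = inr true ↦ b w` and `c = inr false ↦ c`. -/
def accumulate : FreeMonoid (A ⊕ Bool) →* FreeMonoid (A ⊕ Bool) :=
  FreeMonoid.lift fun
    | .inl a => FreeMonoid.map Sum.inl (σ (.of a))
    | .inr true => .of (.inr true) * FreeMonoid.map Sum.inl w
    | .inr false => .of (.inr false)

theorem semiconj_map_inl_accumulate :
    Function.Semiconj (FreeMonoid.map Sum.inl) σ (accumulate σ w) := fun u =>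
  DFunLike.congr_fun
    (FreeMonoid.hom_eq (f := (FreeMonoid.map Sum.inl).comp σ)
      (g := (accumulate σ w).comp (FreeMonoid.map Sum.inl)) fun _ => rfl) u

theorem iterate_accumulate_of_inr_false (n : ℕ) :
    (⇑(accumulate σ w))^[n] (.of (.inr false)) = .of (.inr false) :=
  Function.iterate_fixed rfl n

theorem length_iterate_accumulate_of_inr_true (n : ℕ) :
    ((⇑(accumulate σ w))^[n] (.of (.inr true))).length
      = 1 + ∑ k ∈ Finset.range n, ((⇑σ)^[k] w).length := by
  induction n with
  | zero => rfl
  | succ n ih =>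
    have hb : accumulate σ w (.of (.inr true)) = .of (.inr true) * FreeMonoid.map Sum.inl w :=
      rfl
    rw [Function.iterate_succ_apply, hb, iterate_map_mul, FreeMonoid.length_mul, ih,
      ← (semiconj_map_inl_accumulate σ w).iterate_right, FreeMonoid.length_map,
      Finset.sum_range_succ, add_assoc]

end D0L

theorem IsD0LGrowth.natCast_add_sum_range {g : ℕ → ℝ} (hg : IsD0LGrowth g) {m : ℕ} (hm : 0 < m) :
    IsD0LGrowth fun n => m + ∑ k ∈ Finset.range n, g k := by
  obtain ⟨A, _, σ, w, hw⟩ := hg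
  refine ⟨A ⊕ Bool, inferInstance, D0L.accumulate σ w, .of (.inr true) * .of (.inr false) ^ (m - 1),
    fun n => ?_⟩
  rw [iterate_map_mul, iterate_map_pow, D0L.iterate_accumulate_of_inr_false,
    FreeMonoid.length_mul, D0L.length_iterate_accumulate_of_inr_true, FreeMonoid.length_pow,
    FreeMonoid.length_of, mul_one]
  push_cast [Nat.cast_sub hm, hw]
  ring

theorem stmt_12 (f : ℕ → ℝ) (hf0 : ∃ m : ℕ, 0 < m ∧ f 0 = (m : ℝ))
    (hdf : IsD0LGrowth (fun n : ℕ => f (n + 1) - f n)) :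
    IsD0LGrowth f := by
  obtain ⟨m, hm, hf0⟩ := hf0
  convert hdf.natCast_add_sum_range hm using 2 with n
  rw [Finset.sum_range_sub, ← hf0]
  ring
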